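/- Let (g,·) be a pre-Lie algebra over a field K of characteristic 0 and N: g → g a Nijenhuis operator, i.e. N(x)·N(y) = N(N(x)·y + x·N(y) − N(x·y)) for all x,y ∈ g. Define x ·_N y := N(x)·y + x·N(y) − N(x·y). Then (g, ·_N) is a pre-Lie algebra (the product ·_N satisfies the pre-Lie identity), and N is a pre-Lie algebra homomorphism from (g, ·_N) to (g, ·), i.e. N(x ·_N y) = N(x)·N(y) for all x,y ∈ g. -/
import Mathlib


/-- The deformed product `x ·_N y := N(x)·y + x·N(y) − N(x·y)` associated to a linear
operator `N`. -/
def nijProd {K g : Type*} [Field K] [AddCommGroup g] [Module K g]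
    (mul : g →ₗ[K] g →ₗ[K] g) (N : g →ₗ[K] g) (x y : g) : g :=
  mul (N x) y + mul x (N y) - N (mul x y)

/-- If `N` is a Nijenhuis operator on a pre-Lie algebra `(g,·)`, then `·_N` is a
pre-Lie product and `N` is a pre-Lie algebra homomorphism from `(g, ·_N)` to `(g, ·)`. -/
theorem nijenhuis_gives_preLie_and_hom {K : Type*} [Field K] [CharZero K]
    {g : Type*} [AddCommGroup g] [Module K g]
    (mul : g →ₗ[K] g →ₗ[K] g)
    (hpre : ∀ x y z : g,
      mul (mul x y) z - mul x (mul y z) = mul (mul y x) z - mul y (mul x z))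
    (N : g →ₗ[K] g)
    (hN : ∀ x y : g, mul (N x) (N y) = N (nijProd mul N x y)) :
    (∀ x y z : g,
      nijProd mul N (nijProd mul N x y) z - nijProd mul N x (nijProd mul N y z)
        = nijProd mul N (nijProd mul N y x) z - nijProd mul N y (nijProd mul N x z)) ∧
    (∀ x y : g, N (nijProd mul N x y) = mul (N x) (N y)) := by
  refine ⟨fun x y z => ?_, fun x y => (hN x y).symm⟩
  have h1 := hpre (N x) y (N z)
  have h2 := hpre x (N y) (N z)
  have h3 := hpre (N x) (N y) z
  have h4 := congrArg N (hpre (N x) y z)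
  have h5 := congrArg N (hpre x (N y) z)
  have h6 := congrArg N (hpre x y (N z))
  have h7 := congrArg N (congrArg N (hpre x y z))
  simp only [nijProd, map_add, map_sub, LinearMap.add_apply, LinearMap.sub_apply, hN]
    at h1 h2 h3 h4 h5 h6 h7 ⊢
  linear_combination (norm := module) h1 + h2 + h3 - h4 - h5 - h6 + h7
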